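/- Let m ≥ 3 and let W_m be the graph obtained from the Cartesian product of a one-way infinite ray P_{0,∞} and the cycle C_m by adding a new hub vertex u adjacent to all m vertices of the cycle at the end of the ray (so that end cycle together with u forms a wheel on m+1 vertices). Then for every integer d ≥ 1, a single firefighter can contain a fire starting at u in the distance-restricted game with parameter d; that is, f_d(W_m, u) = 1 for all d ≥ 1. -/

import Mathlib

/- Distance-restricted firefighter game (Burgess, Marcoux, Pike, arXiv:2204.01908).

At time 0 a fire breaks out at the set `F` of vertices and each firefighter is placed on
(protects) a vertex not in `F`.  At each subsequent time step the fire spreads to every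
unburnt, unprotected neighbour of a burning vertex, and then each firefighter moves to a
vertex at distance at most `d` from its current vertex in the subgraph induced by the
unburnt vertices (i.e. along a walk of length ≤ `d` through unburnt vertices).
Occupied vertices are protected forever.  The fire is contained if the burnt set
stabilizes after finitely many steps. -/

namespace Firefight

variable {V : Type*}

/-- There is a walk in `G` from `u` to `v` of length at most `d` all of whose vertices
(including the endpoints) lie in `S`. -/
def ReachWithin (G : SimpleGraph V) (S : Set V) (d : ℕ) (u v : V) : Prop :=
  ∃ p : G.Walk u v, p.length ≤ d ∧ ∀ x ∈ p.support, x ∈ S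

/-- The set of burnt vertices at each time: `F` is the set initially on fire, and
`prot t` is the set of vertices that are protected when the fire spreads at step `t+1`. -/
def burnt (G : SimpleGraph V) (F : Set V) (prot : ℕ → Set V) : ℕ → Set V
  | 0 => F
  | t + 1 => burnt G F prot t ∪ {v | v ∉ prot t ∧ ∃ w ∈ burnt G F prot t, G.Adj w v}

/-- The set of vertices protected by time `t`: all vertices occupied by some firefighter
at some time `s ≤ t`, where `pos s i` is the vertex occupied by firefighter `i` at time `s`. -/
def protOf {k : ℕ} (pos : ℕ → Fin k → V) (t : ℕ) : Set V :=
  {v | ∃ s ≤ t, ∃ i, pos s i = v}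

/-- `k` firefighters, each moving distance at most `d` per turn within the unburnt subgraph,
can contain a fire starting at `F`, the burnt set stabilizing by time `T`. -/
def CanContainIn (G : SimpleGraph V) (d k : ℕ) (F : Set V) (T : ℕ) : Prop :=
  ∃ pos : ℕ → Fin k → V,
    (∀ i, pos 0 i ∉ F) ∧
    (∀ t i, ReachWithin G (burnt G F (protOf pos) (t + 1))ᶜ d (pos t i) (pos (t + 1) i)) ∧
    ∀ t, burnt G F (protOf pos) t ⊆ burnt G F (protOf pos) T

/-- `k` firefighters, each moving distance at most `d` per turn within the unburnt subgraph,
can contain a fire starting at `F`. -/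
def CanContain (G : SimpleGraph V) (d k : ℕ) (F : Set V) : Prop :=
  ∃ T, CanContainIn G d k F T

/-- The distance-restricted firefighter number `f_d(G,u)`: the least number of firefighters
that can contain a fire starting at `u` in the distance-`d` game. -/
noncomputable def fdNum (G : SimpleGraph V) (d : ℕ) (u : V) : ℕ :=
  sInf {k | CanContain G d k {u}}

/-- The cycle on `m` vertices (for `m ≥ 3`): vertex set `ZMod m`, `i` adjacent to `i ± 1`. -/
def cycleGraph (m : ℕ) : SimpleGraph (ZMod m) :=
  SimpleGraph.fromRel (fun i j => j = i + 1)

/-- The one-way infinite ray `P_{0,∞}`: vertices `0,1,2,…` with edges between consecutive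
integers. -/
def rayGraph : SimpleGraph ℕ :=
  SimpleGraph.fromRel (fun i j => j = i + 1)

/-- The graph `W_m`: the Cartesian product `P_{0,∞} □ C_m` of the one-way infinite ray and
the `m`-cycle, together with a new hub vertex (`none`) adjacent to all `m` vertices of the
cycle at the end (ray-coordinate `0`) of the ray, so that end cycle together with the hub
forms a wheel on `m+1` vertices. -/
def wheelRay (m : ℕ) : SimpleGraph (Option (ℕ × ZMod m)) :=
  SimpleGraph.fromRel (fun p q =>
    (∃ a b : ℕ × ZMod m, p = some a ∧ q = some b ∧ (rayGraph.boxProd (cycleGraph m)).Adj a b) ∨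
    (p = none ∧ ∃ i : ZMod m, q = some (0, i)))

/-!
The firefighter stands on the cycle at ray coordinate `m`, i.e. at distance `m + 1` from the hub,
and walks once around it, one vertex per turn; it has protected the whole cycle at time `m - 1`.
The fire spreads at unit speed, so it cannot reach distance `m + 1` before time `m + 1`: it is
trapped in the finite ball of radius `m`, which has burnt out by time `m`. Without a firefighter
the fire climbs a column of the ray forever.
-/

section Game

variable {G : SimpleGraph V} {F : Set V} {prot : ℕ → Set V}

theorem ReachWithin.refl {S : Set V} {u : V} (d : ℕ) (hu : u ∈ S) : ReachWithin G S d u u :=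
  ⟨.nil, Nat.zero_le d, by simpa using hu⟩

theorem ReachWithin.of_adj {S : Set V} {u v : V} {d : ℕ} (h : G.Adj u v) (hu : u ∈ S)
    (hv : v ∈ S) (hd : 1 ≤ d) : ReachWithin G S d u v :=
  ⟨.cons h .nil, by simpa using hd, by simp [hu, hv]⟩

theorem burnt_mono : Monotone (burnt G F prot) :=
  monotone_nat_of_le_succ fun _ => Set.subset_union_left

theorem mem_burnt_succ {t : ℕ} {v w : V} (hw : w ∈ burnt G F prot t) (hv : v ∉ prot t)
    (hadj : G.Adj w v) : v ∈ burnt G F prot (t + 1) :=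
  Or.inr ⟨hv, w, hw, hadj⟩

theorem le_of_mem_burnt (f : V → ℕ) (hf : ∀ w v, G.Adj w v → f v ≤ f w + 1)
    (hF : ∀ v ∈ F, f v = 0) : ∀ t, ∀ v ∈ burnt G F prot t, f v ≤ t
  | 0, v, hv => (hF v hv).le
  | t + 1, v, .inl hv => (le_of_mem_burnt f hf hF t v hv).trans t.le_succ
  | t + 1, v, .inr ⟨_, w, hw, hadj⟩ => (hf w v hadj).trans (by
      have := le_of_mem_burnt f hf hF t w hw; omega)

theorem burnt_subset_of_frontier_protected (B : Set V) (hF : F ⊆ B)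
    (hB : ∀ t w v, w ∈ burnt G F prot t → w ∈ B → v ∉ B → G.Adj w v → v ∈ prot t) :
    ∀ t, burnt G F prot t ⊆ B
  | 0 => hF
  | t + 1 => by
    rintro v (hv | ⟨hvp, w, hw, hadj⟩)
    · exact burnt_subset_of_frontier_protected B hF hB t hv
    · by_contra hvB
      exact hvp (hB t w v hw (burnt_subset_of_frontier_protected B hF hB t hw) hvB hadj)

theorem protOf_of_isEmpty (pos : ℕ → Fin 0 → V) (t : ℕ) : protOf pos t = ∅ :=
  Set.eq_empty_of_forall_notMem fun _ ⟨_, _, i, _⟩ => i.elim0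

theorem fdNum_eq_one {d : ℕ} {u : V} (h₁ : CanContain G d 1 {u}) (h₀ : ¬CanContain G d 0 {u}) :
    fdNum G d u = 1 :=
  le_antisymm (Nat.sInf_le h₁) <| Nat.one_le_iff_ne_zero.2 fun h =>
    h₀ (h ▸ Nat.sInf_mem (s := {k | CanContain G d k {u}}) ⟨1, h₁⟩)

end Game

section WheelRay

variable {m : ℕ}

/-- The distance from the hub in `wheelRay m`. -/
def depth : Option (ℕ × ZMod m) → ℕ
  | none => 0
  | some p => p.1 + 1

@[simp]
theorem depth_none : depth (none : Option (ℕ × ZMod m)) = 0 := rfl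

@[simp]
theorem depth_some (n : ℕ) (i : ZMod m) : depth (some (n, i)) = n + 1 := rfl

theorem depth_le_of_adj {p q : Option (ℕ × ZMod m)} (h : (wheelRay m).Adj p q) :
    depth q ≤ depth p + 1 := by
  rw [wheelRay, SimpleGraph.fromRel_adj] at h
  rcases h with ⟨-, (⟨⟨n, i⟩, ⟨n', j⟩, rfl, rfl, hab⟩ | ⟨rfl, i, rfl⟩) |
    (⟨⟨n, i⟩, ⟨n', j⟩, rfl, rfl, hab⟩ | ⟨rfl, i, rfl⟩)⟩ <;>
    first
    | simp only [SimpleGraph.boxProd_adj, rayGraph, SimpleGraph.fromRel_adj] at hab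
      simp only [depth_some]
      omega
    | simp

theorem depth_le_of_mem_burnt {prot : ℕ → Set (Option (ℕ × ZMod m))} {t : ℕ}
    {v : Option (ℕ × ZMod m)} (hv : v ∈ burnt (wheelRay m) {none} prot t) : depth v ≤ t :=
  le_of_mem_burnt depth (fun _ _ => depth_le_of_adj) (by simp) t v hv

theorem wheelRay_adj_hub (i : ZMod m) : (wheelRay m).Adj none (some (0, i)) := by
  rw [wheelRay, SimpleGraph.fromRel_adj]
  exact ⟨by simp, Or.inl (Or.inr ⟨rfl, i, rfl⟩)⟩

theorem wheelRay_adj_up (n : ℕ) (i : ZMod m) :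
    (wheelRay m).Adj (some (n, i)) (some (n + 1, i)) := by
  rw [wheelRay, SimpleGraph.fromRel_adj]
  refine ⟨by simp, Or.inl (Or.inl ⟨(n, i), (n + 1, i), rfl, rfl, ?_⟩)⟩
  simp [SimpleGraph.boxProd_adj, rayGraph, SimpleGraph.fromRel_adj]

theorem wheelRay_adj_around (n : ℕ) {i : ZMod m} (hi : i ≠ i + 1) :
    (wheelRay m).Adj (some (n, i)) (some (n, i + 1)) := by
  rw [wheelRay, SimpleGraph.fromRel_adj]
  refine ⟨by simpa using hi, Or.inl (Or.inl ⟨(n, i), (n, i + 1), rfl, rfl, ?_⟩)⟩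
  simp [SimpleGraph.boxProd_adj, cycleGraph, SimpleGraph.fromRel_adj, hi]

theorem some_mem_burnt_wheelRay {prot : ℕ → Set (Option (ℕ × ZMod m))} (i : ZMod m) :
    ∀ n, (∀ s ≤ n, some (s, i) ∉ prot s) → some (n, i) ∈ burnt (wheelRay m) {none} prot (n + 1)
  | 0, h => mem_burnt_succ rfl (h 0 le_rfl) (wheelRay_adj_hub i)
  | n + 1, h => mem_burnt_succ
      (some_mem_burnt_wheelRay i n fun s hs => h s (hs.trans n.le_succ)) (h _ le_rfl)
      (wheelRay_adj_up n i)

theorem not_canContain_zero_wheelRay (d : ℕ) : ¬CanContain (wheelRay m) d 0 {none} := by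
  rintro ⟨T, pos, -, -, hT⟩
  have hburn := some_mem_burnt_wheelRay (prot := protOf pos) (0 : ZMod m) T
    fun s _ => by simp [protOf_of_isEmpty]
  have := depth_le_of_mem_burnt (hT _ hburn)
  simp at this

def ringGuard (m : ℕ) (t : ℕ) (_ : Fin 1) : Option (ℕ × ZMod m) :=
  some (m, ((min t (m - 1) : ℕ) : ZMod m))

theorem depth_of_mem_protOf_ringGuard {t : ℕ} {v : Option (ℕ × ZMod m)}
    (hv : v ∈ protOf (ringGuard m) t) : depth v = m + 1 := by
  obtain ⟨_, _, _, rfl⟩ := hv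
  rfl

theorem some_mem_protOf_ringGuard [NeZero m] {t : ℕ} (ht : m - 1 ≤ t) (i : ZMod m) :
    some (m, i) ∈ protOf (ringGuard m) t := by
  have hi := ZMod.val_lt i
  refine ⟨i.val, by omega, 0, ?_⟩
  simp [ringGuard, Nat.min_eq_left (show i.val ≤ m - 1 by omega)]

theorem reachWithin_ringGuard [NeZero m] {S : Set (Option (ℕ × ZMod m))} {d : ℕ} (hd : 1 ≤ d)
    (hS : ∀ i, some (m, i) ∈ S) (t : ℕ) :
    ReachWithin (wheelRay m) S d (ringGuard m t 0) (ringGuard m (t + 1) 0) := by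
  rcases Nat.lt_or_ge t (m - 1) with ht | ht
  · have hval : ∀ k < m, ((k : ℕ) : ZMod m).val = k := fun _ => ZMod.val_cast_of_lt
    have hne : (t : ZMod m) ≠ (t : ZMod m) + 1 := fun h => by
      have := congrArg ZMod.val h
      rw [← Nat.cast_succ, hval t (by omega), hval (t + 1) (by omega)] at this
      omega
    simpa [ringGuard, Nat.min_eq_left ht.le, Nat.min_eq_left (show t + 1 ≤ m - 1 by omega)]
      using ReachWithin.of_adj (wheelRay_adj_around m hne) (hS _) (hS _) hd
  · simpa [ringGuard, Nat.min_eq_right ht, Nat.min_eq_right (show m - 1 ≤ t + 1 by omega)]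
      using ReachWithin.refl d (hS _)

theorem burnt_ringGuard_subset [NeZero m] (t : ℕ) :
    burnt (wheelRay m) {none} (protOf (ringGuard m)) t ⊆ {v | depth v ≤ m} := by
  refine burnt_subset_of_frontier_protected _ (by simp) (fun s w v hw hwB hvB hadj => ?_) t
  have hws := depth_le_of_mem_burnt hw
  have hvw := depth_le_of_adj hadj
  have hwv := depth_le_of_adj hadj.symm
  obtain _ | ⟨n, i⟩ := v
  · simp at hvB
  · simp only [Set.mem_ofPred_eq, depth_some] at hwB hvB hvw hwv
    obtain rfl : n = m := by omega
    exact some_mem_protOf_ringGuard (by omega) i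

theorem canContainIn_ringGuard [NeZero m] {d : ℕ} (hd : 1 ≤ d) :
    CanContainIn (wheelRay m) d 1 {none} m := by
  have hsafe : ∀ t (i : ZMod m),
      some (m, i) ∈ (burnt (wheelRay m) {none} (protOf (ringGuard m)) t)ᶜ := fun t i h => by
    simpa using burnt_ringGuard_subset t h
  refine ⟨ringGuard m, fun _ => by simp [ringGuard], fun t _ =>
    reachWithin_ringGuard hd (hsafe (t + 1)) t, fun t v hv => ?_⟩
  obtain _ | ⟨n, i⟩ := v
  · exact burnt_mono (Nat.zero_le m) rfl
  · have hn : n + 1 ≤ m := burnt_ringGuard_subset t hv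
    refine burnt_mono hn (some_mem_burnt_wheelRay i n fun s _ hs => ?_)
    have := depth_of_mem_protOf_ringGuard hs
    rw [depth_some] at this
    omega

end WheelRay

/-- For `m ≥ 3` and every integer `d ≥ 1`, a single firefighter can contain a fire starting
at the hub `u` of `W_m` in the distance-restricted game with parameter `d`:
`f_d(W_m, u) = 1` for all `d ≥ 1`. -/
theorem layered_wheel_one_firefighter :
    ∀ m : ℕ, 3 ≤ m → ∀ d : ℕ, 1 ≤ d →
      fdNum (wheelRay m) d (none : Option (ℕ × ZMod m)) = 1 := by
  intro m hm d hd
  have : NeZero m := ⟨by omega⟩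
  exact fdNum_eq_one ⟨m, canContainIn_ringGuard hd⟩ (not_canContain_zero_wheelRay d)

end Firefight
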